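/- Let g₁,…,g_m and Δg₁,…,Δg_m be N×N complex Hermitian matrices with g̃ⱼ := gⱼ + Δgⱼ, and let α, Δα ∈ ℝ^m with α̃ := α + Δα. Set ε_g := maxⱼ ‖Δgⱼ‖ (spectral norm), ε_α := ‖Δα‖_∞, κ := κ(g), γ := γ(g|α), γ̃ := γ(g̃|α̃). Assume κ > 0 and ε_g < κ. Then γ̃ ≥ (γ − ε_α/(2κ)) / (1 + ε_g/κ). -/

import Mathlib

open scoped BigOperators

set_option synthInstance.maxHeartbeats 1000000
set_option maxHeartbeats 4000000

/-- The spectral norm (ℓ²-operator norm) of a complex matrix. -/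
noncomputable def specNorm {n : Type*} [Fintype n] [DecidableEq n]
    (A : Matrix n n ℂ) : ℝ :=
  ‖Matrix.toEuclideanCLM (𝕜 := ℂ) A‖

lemma specNorm_nonneg {n : Type*} [Fintype n] [DecidableEq n] (A : Matrix n n ℂ) :
    0 ≤ specNorm A := norm_nonneg _

lemma specNorm_zero {n : Type*} [Fintype n] [DecidableEq n] :
    specNorm (0 : Matrix n n ℂ) = 0 := by
  simp [specNorm, map_zero]

lemma specNorm_add_le {n : Type*} [Fintype n] [DecidableEq n] (A B : Matrix n n ℂ) :
    specNorm (A + B) ≤ specNorm A + specNorm B := by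
  simp only [specNorm, map_add]; exact norm_add_le _ _

lemma specNorm_smul {n : Type*} [Fintype n] [DecidableEq n] (c : ℝ) (A : Matrix n n ℂ) :
    specNorm (c • A) = |c| * specNorm A := by
  have h : c • A = (c : ℂ) • A := by
    ext i j; simp [Matrix.smul_apply, Complex.real_smul]
  rw [h, specNorm, specNorm, map_smul]
  have h2 := norm_smul (c : ℂ) (Matrix.toEuclideanCLM (𝕜 := ℂ) A)
  rw [h2]; simp [Complex.norm_real]

lemma specNorm_sum_smul_le {n : Type*} [Fintype n] [DecidableEq n] {m : ℕ}
    (y : Fin m → ℝ) (A : Fin m → Matrix n n ℂ) :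
    specNorm (∑ j, y j • A j) ≤ ∑ j, |y j| * specNorm (A j) := by
  simp only [specNorm, map_sum]
  refine (norm_sum_le _ _).trans (Finset.sum_le_sum fun j _ => ?_)
  have h : (y j • A j) = ((y j : ℂ)) • A j := by
    ext i k; simp [Matrix.smul_apply, Complex.real_smul]
  rw [h, map_smul]
  have h2 := norm_smul ((y j : ℂ)) (Matrix.toEuclideanCLM (𝕜 := ℂ) (A j))
  rw [h2]; simp [Complex.norm_real]

/-- The conditioning constant `κ(g)`: the infimum over real vectors `y` with `‖y‖₁ = 1` and
real `μ` of the spectral norm `‖Σⱼ yⱼ gⱼ + μ I‖`. -/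
noncomputable def kappa {N m : ℕ} (g : Fin m → Matrix (Fin N) (Fin N) ℂ) : ℝ :=
  sInf {c : ℝ | ∃ (y : Fin m → ℝ) (μ : ℝ), (∑ j, |y j|) = 1 ∧
    c = specNorm (∑ j, y j • g j + μ • (1 : Matrix (Fin N) (Fin N) ℂ))}

/-- The dual value `γ(g|α)`: the supremum of `Σⱼ αⱼ yⱼ` over all `y` for which there exists
`μ` with `‖Σⱼ yⱼ gⱼ + μ I‖ ≤ 1/2` in spectral norm. -/
noncomputable def gammaVal {N m : ℕ} (g : Fin m → Matrix (Fin N) (Fin N) ℂ)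
    (α : Fin m → ℝ) : ℝ :=
  sSup {c : ℝ | ∃ (y : Fin m → ℝ) (μ : ℝ),
    specNorm (∑ j, y j • g j + μ • (1 : Matrix (Fin N) (Fin N) ℂ)) ≤ 1 / 2 ∧
    c = ∑ j, α j * y j}

/-- Fundamental property of κ: `κ ‖y‖₁ ≤ ‖∑ yⱼ gⱼ + μ I‖` for all `y, μ`. -/
lemma kappa_mul_le {N m : ℕ} (g : Fin m → Matrix (Fin N) (Fin N) ℂ)
    (y : Fin m → ℝ) (μ : ℝ) :
    kappa g * (∑ j, |y j|) ≤
      specNorm (∑ j, y j • g j + μ • (1 : Matrix (Fin N) (Fin N) ℂ)) := by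
  set t := ∑ j, |y j| with ht
  have ht0 : 0 ≤ t := Finset.sum_nonneg fun j _ => abs_nonneg _
  rcases eq_or_lt_of_le ht0 with h0 | h0
  · rw [← h0, mul_zero]; exact specNorm_nonneg _
  · have hbdd : BddBelow {c : ℝ | ∃ (y : Fin m → ℝ) (μ : ℝ), (∑ j, |y j|) = 1 ∧
        c = specNorm (∑ j, y j • g j + μ • (1 : Matrix (Fin N) (Fin N) ℂ))} := by
      refine ⟨0, fun c hc => ?_⟩
      obtain ⟨y', μ', _, hc⟩ := hc
      rw [hc]; exact specNorm_nonneg _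
    have hscale : (∑ j, (y j / t) • g j + (μ / t) • (1 : Matrix (Fin N) (Fin N) ℂ))
        = t⁻¹ • (∑ j, y j • g j + μ • (1 : Matrix (Fin N) (Fin N) ℂ)) := by
      rw [smul_add, Finset.smul_sum]
      congr 1
      · exact Finset.sum_congr rfl fun j _ => by rw [smul_smul]; ring_nf
      · rw [smul_smul]; ring_nf
    have hmem : specNorm (∑ j, (y j / t) • g j + (μ / t) • (1 : Matrix (Fin N) (Fin N) ℂ))
        ∈ {c : ℝ | ∃ (y : Fin m → ℝ) (μ : ℝ), (∑ j, |y j|) = 1 ∧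
        c = specNorm (∑ j, y j • g j + μ • (1 : Matrix (Fin N) (Fin N) ℂ))} := by
      refine ⟨fun j => y j / t, μ / t, ?_, rfl⟩
      have : ∀ j, |y j / t| = |y j| / t := fun j => by
        rw [abs_div, abs_of_pos h0]
      simp only [this, ← Finset.sum_div]
      rw [← ht, div_self (ne_of_gt h0)]
    have hle := csInf_le hbdd hmem
    rw [hscale, specNorm_smul, abs_of_pos (inv_pos.mpr h0)] at hle
    calc kappa g * t ≤ (t⁻¹ * specNorm (∑ j, y j • g j + μ • (1 : Matrix (Fin N) (Fin N) ℂ))) * t :=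
          mul_le_mul_of_nonneg_right hle ht0
      _ = specNorm (∑ j, y j • g j + μ • (1 : Matrix (Fin N) (Fin N) ℂ)) := by
          field_simp

/-- Lower perturbation bound for γ: `γ̃ ≥ (γ − ε_α/(2κ)) / (1 + ε_g/κ)` when `ε_g < κ`. -/
theorem gamma_perturb_lower {N m : ℕ} (hm : 0 < m)
    (g Δg : Fin m → Matrix (Fin N) (Fin N) ℂ)
    (hg : ∀ j, (g j).IsHermitian) (hΔg : ∀ j, (Δg j).IsHermitian)
    (α Δα : Fin m → ℝ) (εg εα : ℝ)
    (hεg : εg = Finset.univ.sup' (Finset.univ_nonempty_iff.mpr (Fin.pos_iff_nonempty.mp hm))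
      (fun j => specNorm (Δg j)))
    (hεα : εα = Finset.univ.sup' (Finset.univ_nonempty_iff.mpr (Fin.pos_iff_nonempty.mp hm))
      (fun j => |Δα j|))
    (hκ : 0 < kappa g) (hlt : εg < kappa g) :
    (gammaVal g α - εα / (2 * kappa g)) / (1 + εg / kappa g) ≤
      gammaVal (fun j => g j + Δg j) (fun j => α j + Δα j) := by
  classical
  set κ := kappa g with hκdef
  have hεg0 : 0 ≤ εg := by
    rw [hεg]
    have h := Finset.le_sup' (fun j => specNorm (Δg j)) (Finset.mem_univ (⟨0, hm⟩ : Fin m))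
    exact le_trans (specNorm_nonneg _) h
  have hεα0 : 0 ≤ εα := by
    rw [hεα]
    have h := Finset.le_sup' (fun j => |Δα j|) (Finset.mem_univ (⟨0, hm⟩ : Fin m))
    exact le_trans (abs_nonneg _) h
  have hΔg_le : ∀ j, specNorm (Δg j) ≤ εg := fun j => by
    rw [hεg]
    have h := Finset.le_sup' (fun j => specNorm (Δg j)) (Finset.mem_univ j)
    exact h
  have hΔα_le : ∀ j, |Δα j| ≤ εα := fun j => by
    rw [hεα]
    have h := Finset.le_sup' (fun j => |Δα j|) (Finset.mem_univ j)
    exact h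
  set b := 1 + εg / κ with hbdef
  have hb : 0 < b := by positivity
  set S' := {c : ℝ | ∃ (y : Fin m → ℝ) (μ : ℝ),
    specNorm (∑ j, y j • (g j + Δg j) + μ • (1 : Matrix (Fin N) (Fin N) ℂ)) ≤ 1 / 2 ∧
    c = ∑ j, (α j + Δα j) * y j} with hS'
  -- splitting identity
  have hsplit : ∀ (y : Fin m → ℝ) (μ : ℝ),
      (∑ j, y j • (g j + Δg j) + μ • (1 : Matrix (Fin N) (Fin N) ℂ))
      = (∑ j, y j • g j + μ • (1 : Matrix (Fin N) (Fin N) ℂ)) + ∑ j, y j • Δg j := by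
    intro y μ
    simp only [smul_add, Finset.sum_add_distrib]
    abel
  have hΔsum : ∀ (y : Fin m → ℝ), specNorm (∑ j, y j • Δg j) ≤ εg * ∑ j, |y j| := by
    intro y
    refine (specNorm_sum_smul_le y Δg).trans ?_
    rw [Finset.mul_sum]
    exact Finset.sum_le_sum fun j _ => by
      rw [mul_comm (εg) _]
      exact mul_le_mul_of_nonneg_left (hΔg_le j) (abs_nonneg _)
  -- lower bound on perturbed norm
  have hlow : ∀ (y : Fin m → ℝ) (μ : ℝ),
      (κ - εg) * (∑ j, |y j|) ≤
      specNorm (∑ j, y j • (g j + Δg j) + μ • (1 : Matrix (Fin N) (Fin N) ℂ)) := by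
    intro y μ
    have h1 := kappa_mul_le g y μ
    have h2 : specNorm (∑ j, y j • g j + μ • (1 : Matrix (Fin N) (Fin N) ℂ))
        ≤ specNorm (∑ j, y j • (g j + Δg j) + μ • (1 : Matrix (Fin N) (Fin N) ℂ))
          + εg * ∑ j, |y j| := by
      have heq : (∑ j, y j • g j + μ • (1 : Matrix (Fin N) (Fin N) ℂ))
          = (∑ j, y j • (g j + Δg j) + μ • (1 : Matrix (Fin N) (Fin N) ℂ))
            + ∑ j, (-(y j)) • Δg j := by
        rw [hsplit]
        simp only [neg_smul, Finset.sum_neg_distrib]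
        abel
      calc specNorm (∑ j, y j • g j + μ • (1 : Matrix (Fin N) (Fin N) ℂ))
          ≤ specNorm (∑ j, y j • (g j + Δg j) + μ • (1 : Matrix (Fin N) (Fin N) ℂ))
            + specNorm (∑ j, (-(y j)) • Δg j) := heq ▸ specNorm_add_le _ _
        _ ≤ _ := by
            refine add_le_add_right ?_ _
            have := hΔsum (fun j => -(y j))
            simpa using this
    nlinarith [h1, h2]
  -- S' nonempty
  have hne' : S'.Nonempty := by
    refine ⟨0, fun _ => 0, 0, ?_, by simp⟩
    simp [specNorm_zero]
  -- S' bounded above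
  have hbdd' : BddAbove S' := by
    refine ⟨(∑ j, |α j + Δα j|) * (1 / (2 * (κ - εg))), fun c hc => ?_⟩
    obtain ⟨y, μ, hfe, rfl⟩ := hc
    have hyb : (∑ j, |y j|) ≤ 1 / (2 * (κ - εg)) := by
      have := (hlow y μ).trans hfe
      rw [le_div_iff₀ (by linarith : (0:ℝ) < 2 * (κ - εg))]
      nlinarith [this]
    have hy0 : ∀ j, |y j| ≤ ∑ i, |y i| :=
      fun j => Finset.single_le_sum (fun i _ => abs_nonneg (y i)) (Finset.mem_univ j)
    calc ∑ j, (α j + Δα j) * y j ≤ ∑ j, |α j + Δα j| * (1 / (2 * (κ - εg))) := by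
          refine Finset.sum_le_sum fun j _ => ?_
          calc (α j + Δα j) * y j ≤ |(α j + Δα j) * y j| := le_abs_self _
            _ = |α j + Δα j| * |y j| := abs_mul _ _
            _ ≤ |α j + Δα j| * (1 / (2 * (κ - εg))) :=
                mul_le_mul_of_nonneg_left ((hy0 j).trans hyb) (abs_nonneg _)
      _ = (∑ j, |α j + Δα j|) * (1 / (2 * (κ - εg))) := by rw [← Finset.sum_mul]
  -- S nonempty
  have hneS : {c : ℝ | ∃ (y : Fin m → ℝ) (μ : ℝ),
      specNorm (∑ j, y j • g j + μ • (1 : Matrix (Fin N) (Fin N) ℂ)) ≤ 1 / 2 ∧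
      c = ∑ j, α j * y j}.Nonempty := by
    refine ⟨0, fun _ => 0, 0, ?_, by simp⟩
    simp [specNorm_zero]
  rw [div_le_iff₀ hb, hS'] at *
  have hmain : gammaVal g α ≤
      gammaVal (fun j => g j + Δg j) (fun j => α j + Δα j) * b + εα / (2 * κ) := by
    rw [gammaVal]
    refine csSup_le hneS fun c hc => ?_
    obtain ⟨y, μ, hfe, rfl⟩ := hc
    have hyb : (∑ j, |y j|) ≤ 1 / (2 * κ) := by
      have := (kappa_mul_le g y μ).trans hfe
      rw [le_div_iff₀ (by linarith : (0:ℝ) < 2 * κ)]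
      nlinarith [this]
    have hy1 : 0 ≤ ∑ j, |y j| := Finset.sum_nonneg fun j _ => abs_nonneg _
    -- scaled candidate
    set y' := fun j => b⁻¹ * y j with hy'
    have hscale : (∑ j, y' j • (g j + Δg j) + (b⁻¹ * μ) • (1 : Matrix (Fin N) (Fin N) ℂ))
        = b⁻¹ • (∑ j, y j • (g j + Δg j) + μ • (1 : Matrix (Fin N) (Fin N) ℂ)) := by
      rw [smul_add, Finset.smul_sum]
      congr 1
      · exact Finset.sum_congr rfl fun j _ => by rw [smul_smul]
      · rw [smul_smul]
    have hfe' : specNorm (∑ j, y' j • (g j + Δg j)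
        + (b⁻¹ * μ) • (1 : Matrix (Fin N) (Fin N) ℂ)) ≤ 1 / 2 := by
      rw [hscale, specNorm_smul, abs_of_pos (inv_pos.mpr hb)]
      have hup : specNorm (∑ j, y j • (g j + Δg j) + μ • (1 : Matrix (Fin N) (Fin N) ℂ))
          ≤ 1 / 2 + εg * ∑ j, |y j| := by
        rw [hsplit]
        exact (specNorm_add_le _ _).trans (add_le_add hfe (hΔsum y))
      have h3 : εg * ∑ j, |y j| ≤ εg / (2 * κ) := by
        calc εg * ∑ j, |y j| ≤ εg * (1 / (2 * κ)) :=
              mul_le_mul_of_nonneg_left hyb hεg0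
          _ = εg / (2 * κ) := by ring
      have hb2 : 1 / 2 + εg / (2 * κ) = b / 2 := by
        rw [hbdef, add_div, div_div, mul_comm κ 2]
      calc b⁻¹ * specNorm (∑ j, y j • (g j + Δg j) + μ • (1 : Matrix (Fin N) (Fin N) ℂ))
          ≤ b⁻¹ * (b / 2) := by
            refine mul_le_mul_of_nonneg_left ?_ (le_of_lt (inv_pos.mpr hb))
            rw [← hb2]; linarith
        _ = 1 / 2 := by rw [← mul_div_assoc, inv_mul_cancel₀ (ne_of_gt hb)]
    have hmem' : (∑ j, (α j + Δα j) * y' j) ∈ {c : ℝ | ∃ (y : Fin m → ℝ) (μ : ℝ),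
        specNorm (∑ j, y j • (g j + Δg j) + μ • (1 : Matrix (Fin N) (Fin N) ℂ)) ≤ 1 / 2 ∧
        c = ∑ j, (α j + Δα j) * y j} := ⟨y', b⁻¹ * μ, hfe', rfl⟩
    have hle' : (∑ j, (α j + Δα j) * y' j) ≤
        gammaVal (fun j => g j + Δg j) (fun j => α j + Δα j) := le_csSup hbdd' hmem'
    have hval : (∑ j, (α j + Δα j) * y' j) = b⁻¹ * ∑ j, (α j + Δα j) * y j := by
      rw [Finset.mul_sum]
      exact Finset.sum_congr rfl fun j _ => by rw [hy']; ring
    have hΔα_sum : -(εα * ∑ j, |y j|) ≤ ∑ j, Δα j * y j := by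
      have : ∀ j, -(εα * |y j|) ≤ Δα j * y j := by
        intro j
        have h1 : |Δα j * y j| ≤ εα * |y j| := by
          rw [abs_mul]
          exact mul_le_mul_of_nonneg_right (hΔα_le j) (abs_nonneg _)
        linarith [neg_abs_le (Δα j * y j)]
      calc -(εα * ∑ j, |y j|) = ∑ j, -(εα * |y j|) := by
            rw [Finset.mul_sum]; exact (Finset.sum_neg_distrib _).symm
        _ ≤ ∑ j, Δα j * y j := Finset.sum_le_sum fun j _ => this j
    have hsum_split : (∑ j, (α j + Δα j) * y j) = (∑ j, α j * y j) + ∑ j, Δα j * y j := by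
      rw [← Finset.sum_add_distrib]
      exact Finset.sum_congr rfl fun j _ => by ring
    have hεαt : εα * ∑ j, |y j| ≤ εα / (2 * κ) := by
      calc εα * ∑ j, |y j| ≤ εα * (1 / (2 * κ)) := mul_le_mul_of_nonneg_left hyb hεα0
        _ = εα / (2 * κ) := by ring
    -- combine
    have h4 : (∑ j, α j * y j) - εα / (2 * κ) ≤ b * (∑ j, (α j + Δα j) * y' j) := by
      rw [hval, ← mul_assoc, mul_inv_cancel₀ (ne_of_gt hb), one_mul, hsum_split]
      linarith
    have h5 := mul_le_mul_of_nonneg_left hle' hb.le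
    have h6 := mul_comm b (gammaVal (fun j => g j + Δg j) (fun j => α j + Δα j))
    have h7 := sub_le_iff_le_add.mp h4
    exact h7.trans (add_le_add_left (le_of_le_of_eq h5 h6) _)
  linarith [hmain]
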